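/- arXiv:1808.06704 — 3 statements merged into one kernel-verified Lean document; each statement's English description precedes it below -/
import Mathlib

section
/- A regular distribution D is involutive if and only if for every section Z of D⊥ the 2-form d(i_Z g) vanishes on pairs of sections of D. -/
/-!
For `Z ∈ D⊥` and `X, Y ∈ D` the functions `g(Z, X)` and `g(Z, Y)` vanish, so
`d(i_Z g)(X, Y) = -g(Z, [X, Y])`. The condition thus says that `[X, Y]` is orthogonal to `D⊥`,
and by nondegeneracy of `g` and the splitting `V = D ⊕ D⊥` the vectors orthogonal to `D⊥` are
exactly those of `D`.
-/

/-- Abstract algebraic model of the `C^∞(M)`-module of vector fields on a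
Riemannian manifold `(M,g)`: metric `g`, Lie bracket, Levi-Civita connection
`nabla` and the action `act X f = X(f)` of vector fields on functions. -/
structure RiemGeom (C V : Type*) [CommRing C] [AddCommGroup V] [Module C V] where
  g : V →ₗ[C] V →ₗ[C] C
  g_symm : ∀ X Y, g X Y = g Y X
  g_nondeg : ∀ X, (∀ Y, g X Y = 0) → X = 0
  bracket : V → V → V
  nabla : V → V → V
  act : V → C → C
  act_add : ∀ X f₁ f₂, act X (f₁ + f₂) = act X f₁ + act X f₂
  act_mul : ∀ X f₁ f₂, act X (f₁ * f₂) = f₁ * act X f₂ + f₂ * act X f₁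
  act_add_left : ∀ X Y f, act (X + Y) f = act X f + act Y f
  act_smul_left : ∀ (f h : C) X, act (f • X) h = f * act X h
  nabla_add_left : ∀ X X' Y, nabla (X + X') Y = nabla X Y + nabla X' Y
  nabla_smul_left : ∀ (f : C) X Y, nabla (f • X) Y = f • nabla X Y
  nabla_add_right : ∀ X Y Y', nabla X (Y + Y') = nabla X Y + nabla X Y'
  nabla_leibniz : ∀ X (f : C) Y, nabla X (f • Y) = act X f • Y + f • nabla X Y
  torsion_free : ∀ X Y, nabla X Y - nabla Y X = bracket X Y
  metric_compat : ∀ X Y Z, act X (g Y Z) = g (nabla X Y) Z + g Y (nabla X Z)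

/-- A regular distribution `D` in a Riemannian manifold, together with its
orthogonal complement `Dperp` and the orthogonal projection `piD` onto `D`. -/
structure RiemDist {C V : Type*} [CommRing C] [AddCommGroup V] [Module C V]
    (G : RiemGeom C V) where
  D : Submodule C V
  Dperp : Submodule C V
  piD : V →ₗ[C] V
  piD_mem : ∀ v, piD v ∈ D
  piD_id : ∀ v ∈ D, piD v = v
  perp_mem : ∀ v, v - piD v ∈ Dperp
  piD_perp : ∀ w ∈ Dperp, piD w = 0
  orth : ∀ v ∈ D, ∀ w ∈ Dperp, G.g v w = 0

variable {C V : Type*} [CommRing C] [AddCommGroup V] [Module C V]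

/-- The intrinsic connection `∇^D_X Y = π^D (∇_X Y)`. -/
def nablaD (G : RiemGeom C V) (P : RiemDist G) (X Y : V) : V := P.piD (G.nabla X Y)

/-- The second fundamental form `B(X,Y) = ∇_X Y - ∇^D_X Y = π^{D⊥}(∇_X Y)`. -/
def sff (G : RiemGeom C V) (P : RiemDist G) (X Y : V) : V :=
  G.nabla X Y - P.piD (G.nabla X Y)

/-- The Lie derivative of the metric: `(L_Z g)(X,Y)`. -/
def lieMetric (G : RiemGeom C V) (Z X Y : V) : C :=
  G.act Z (G.g X Y) - G.g (G.bracket Z X) Y - G.g X (G.bracket Z Y)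

/-- The exterior derivative of the one-form `i_Z g`: `(d (i_Z g))(X,Y)`. -/
def dIZg (G : RiemGeom C V) (Z X Y : V) : C :=
  G.act X (G.g Z Y) - G.act Y (G.g Z X) - G.g Z (G.bracket X Y)

/-- The curvature endomorphism `R(X,Y)Z` of the Levi-Civita connection. -/
def curvR (G : RiemGeom C V) (X Y Z : V) : V :=
  G.nabla X (G.nabla Y Z) - G.nabla Y (G.nabla X Z) - G.nabla (G.bracket X Y) Z

/-- The curvature endomorphism `R^D(X,Y)Z` of the intrinsic connection, taken
with respect to the projected bracket `[X,Y]^D = π^D [X,Y]`. -/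
def curvRD (G : RiemGeom C V) (P : RiemDist G) (X Y Z : V) : V :=
  nablaD G P X (nablaD G P Y Z) - nablaD G P Y (nablaD G P X Z) -
    nablaD G P (P.piD (G.bracket X Y)) Z

namespace RiemGeom

variable (G : RiemGeom C V)

theorem act_zero (X : V) : G.act X 0 = 0 := by
  simpa using (G.act_add X 0 0).symm

end RiemGeom

namespace RiemDist

variable {G : RiemGeom C V} (P : RiemDist G)

theorem g_perp_eq_zero {Z Y : V} (hZ : Z ∈ P.Dperp) (hY : Y ∈ P.D) : G.g Z Y = 0 := by
  rw [G.g_symm]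
  exact P.orth Y hY Z hZ

theorem mem_D_of_forall_g_perp_eq_zero {W : V} (hW : ∀ Z ∈ P.Dperp, G.g Z W = 0) :
    W ∈ P.D := by
  have hD : ∀ v, G.g (W - P.piD W) (P.piD v) = 0 := fun v =>
    P.g_perp_eq_zero (P.perp_mem W) (P.piD_mem v)
  have hperp : ∀ v, G.g (v - P.piD v) (W - P.piD W) = 0 := fun v => by
    rw [map_sub, hW _ (P.perp_mem v), P.g_perp_eq_zero (P.perp_mem v) (P.piD_mem W), sub_zero]
  have hzero : W - P.piD W = 0 := G.g_nondeg _ fun v =>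
    calc G.g (W - P.piD W) v
        = G.g (W - P.piD W) (P.piD v) + G.g (W - P.piD W) (v - P.piD v) := by
          rw [← map_add, add_sub_cancel]
      _ = 0 := by rw [hD, G.g_symm, hperp, add_zero]
  rw [sub_eq_zero.mp hzero]
  exact P.piD_mem W

theorem dIZg_eq_neg_g_bracket {Z X Y : V} (hZ : Z ∈ P.Dperp) (hX : X ∈ P.D) (hY : Y ∈ P.D) :
    dIZg G Z X Y = -G.g Z (G.bracket X Y) := by
  rw [dIZg, P.g_perp_eq_zero hZ hX, P.g_perp_eq_zero hZ hY, G.act_zero, G.act_zero]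
  ring

end RiemDist

/-- `D` is involutive iff for every section `Z` of `D⊥` the
2-form `d(i_Z g)` vanishes on pairs of sections of `D`. -/
theorem involutive_iff_dIZg_vanishes
    {C V : Type*} [CommRing C] [AddCommGroup V] [Module C V]
    (G : RiemGeom C V) (P : RiemDist G) :
    (∀ X ∈ P.D, ∀ Y ∈ P.D, G.bracket X Y ∈ P.D) ↔
      (∀ Z ∈ P.Dperp, ∀ X ∈ P.D, ∀ Y ∈ P.D, dIZg G Z X Y = 0) := by
  constructor
  · intro h Z hZ X hX Y hY
    rw [P.dIZg_eq_neg_g_bracket hZ hX hY, P.g_perp_eq_zero hZ (h X hX Y hY), neg_zero]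
  · intro h X hX Y hY
    refine P.mem_D_of_forall_g_perp_eq_zero fun Z hZ => neg_eq_zero.mp ?_
    rw [← P.dIZg_eq_neg_g_bracket hZ hX hY]
    exact h Z hZ X hX Y hY
end

section
/- For sections X₁, X₂, X₃ of a regular distribution D, the intrinsic curvature endomorphism satisfies R^D(X₁,X₂)X₃ = π^D(R(X₁,X₂)X₃) − (π^D ∘ ∇_{X₁})(B(X₂,X₃)) + (π^D ∘ ∇_{X₂})(B(X₁,X₃)) + π^D(∇_{π^{D⊥}([X₁,X₂])} X₃), where R is the Riemann curvature endomorphism of (M,g) and R^D is defined with ∇^D and the projected bracket [·,·]^D = π^D([·,·]). -/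
variable {C V : Type*} [CommRing C] [AddCommGroup V] [Module C V]

namespace RiemGeom

variable (G : RiemGeom C V)

theorem nabla_sub_left (X X' Y : V) : G.nabla (X - X') Y = G.nabla X Y - G.nabla X' Y := by
  rw [eq_sub_iff_add_eq, ← G.nabla_add_left, sub_add_cancel]

theorem nabla_sub_right (X Y Y' : V) : G.nabla X (Y - Y') = G.nabla X Y - G.nabla X Y' := by
  rw [eq_sub_iff_add_eq, ← G.nabla_add_right, sub_add_cancel]

end RiemGeom

section IntrinsicConnection

variable (G : RiemGeom C V) (P : RiemDist G)

theorem nablaD_nablaD (X Y Z : V) :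
    nablaD G P X (nablaD G P Y Z) =
      P.piD (G.nabla X (G.nabla Y Z)) - P.piD (G.nabla X (sff G P Y Z)) := by
  rw [nablaD, nablaD, sff, G.nabla_sub_right, map_sub, sub_sub_cancel]

theorem nablaD_piD_left (W Z : V) :
    nablaD G P (P.piD W) Z = P.piD (G.nabla W Z) - P.piD (G.nabla (W - P.piD W) Z) := by
  rw [nablaD, G.nabla_sub_left, map_sub, sub_sub_cancel]

end IntrinsicConnection

/-- for sections `X₁, X₂, X₃` of `D`,
`R^D(X₁,X₂)X₃ = π^D(R(X₁,X₂)X₃) − (π^D∘∇_{X₁})(B(X₂,X₃)) + (π^D∘∇_{X₂})(B(X₁,X₃))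
  + π^D(∇_{π^{D⊥}([X₁,X₂])} X₃)`. -/
theorem intrinsic_curvature_endomorphism
    {C V : Type*} [CommRing C] [AddCommGroup V] [Module C V]
    (G : RiemGeom C V) (P : RiemDist G) :
    ∀ X₁ ∈ P.D, ∀ X₂ ∈ P.D, ∀ X₃ ∈ P.D,
      curvRD G P X₁ X₂ X₃ =
        P.piD (curvR G X₁ X₂ X₃)
          - P.piD (G.nabla X₁ (sff G P X₂ X₃))
          + P.piD (G.nabla X₂ (sff G P X₁ X₃))
          + P.piD (G.nabla (G.bracket X₁ X₂ - P.piD (G.bracket X₁ X₂)) X₃) := by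
  intro X₁ _ X₂ _ X₃ _
  rw [curvRD, nablaD_nablaD, nablaD_nablaD, nablaD_piD_left, curvR, map_sub, map_sub]
  abel
end

section
/- Gauss theorem for distributions: for sections X₁, X₂, X₃, X₄ of a regular distribution D, K^D(X₁,X₂,X₃,X₄) = K(X₁,X₂,X₃,X₄) − g(B(X₁,X₃), B(X₂,X₄)) + g(B(X₂,X₃), B(X₁,X₄)) + g(π^D(∇_{π^{D⊥}([X₁,X₂])} X₃), X₄), where K and K^D are the Riemann curvature (0,4)-tensors of ∇ and of the intrinsic connection ∇^D respectively. -/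
variable {C V : Type*} [CommRing C] [AddCommGroup V] [Module C V]

/-- Gauss theorem for distributions: for sections `X₁,…,X₄` of
`D`, `K^D(X₁,X₂,X₃,X₄) = K(X₁,X₂,X₃,X₄) − g(B(X₁,X₃),B(X₂,X₄))
 + g(B(X₂,X₃),B(X₁,X₄)) + g(π^D(∇_{π^{D⊥}([X₁,X₂])}X₃), X₄)`. -/
theorem gauss_theorem_distributions
    {C V : Type*} [CommRing C] [AddCommGroup V] [Module C V]
    (G : RiemGeom C V) (P : RiemDist G) :
    ∀ X₁ ∈ P.D, ∀ X₂ ∈ P.D, ∀ X₃ ∈ P.D, ∀ X₄ ∈ P.D,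
      G.g (curvRD G P X₁ X₂ X₃) X₄ =
        G.g (curvR G X₁ X₂ X₃) X₄
          - G.g (sff G P X₁ X₃) (sff G P X₂ X₄)
          + G.g (sff G P X₂ X₃) (sff G P X₁ X₄)
          + G.g (P.piD (G.nabla (G.bracket X₁ X₂ - P.piD (G.bracket X₁ X₂)) X₃)) X₄ := by
  intro X₁ h₁ X₂ h₂ X₃ h₃ X₄ h₄
  -- basic facts
  have hperp : ∀ v X, X ∈ P.D → G.g (v - P.piD v) X = 0 := by
    intro v X hX
    rw [G.g_symm]
    exact P.orth X hX _ (P.perp_mem v)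
  have hproj : ∀ v X, X ∈ P.D → G.g (P.piD v) X = G.g v X := by
    intro v X hX
    have h := hperp v X hX
    rw [map_sub, LinearMap.sub_apply, sub_eq_zero] at h
    exact h.symm
  have hact0 : ∀ X : V, G.act X 0 = 0 := by
    intro X
    have h := G.act_add X 0 0
    rw [add_zero] at h
    exact (left_eq_add.mp h)
  have hg_sff : ∀ A B Z, Z ∈ P.D → G.g (sff G P A B) Z = 0 := by
    intro A B Z hZ
    exact hperp (G.nabla A B) Z hZ
  have hsplit : ∀ X Y : V, G.nabla X Y = sff G P X Y + P.piD (G.nabla X Y) := by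
    intro X Y; unfold sff; abel
  have hg_sff_nabla : ∀ A B X Y, G.g (sff G P A B) (G.nabla X Y) =
      G.g (sff G P A B) (sff G P X Y) := by
    intro A B X Y
    conv_lhs => rw [hsplit X Y]
    rw [map_add]
    have h0 : G.g (sff G P A B) (P.piD (G.nabla X Y)) = 0 := by
      rw [G.g_symm]
      exact P.orth _ (P.piD_mem _) _ (P.perp_mem _)
    rw [h0, add_zero]
  have hnablaB : ∀ X Y Z W, W ∈ P.D →
      G.g (G.nabla X (sff G P Y Z)) W = - G.g (sff G P Y Z) (sff G P X W) := by
    intro X Y Z W hW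
    have mc := G.metric_compat X (sff G P Y Z) W
    rw [hg_sff _ _ _ hW, hact0, hg_sff_nabla] at mc
    linear_combination -mc
  have hsub_r : ∀ X Y Y' : V, G.nabla X (Y - Y') = G.nabla X Y - G.nabla X Y' := by
    intro X Y Y'
    have h := G.nabla_add_right X (Y - Y') Y'
    rw [sub_add_cancel] at h
    exact eq_sub_of_add_eq h.symm
  -- the three terms of the intrinsic curvature
  have t1 : G.g (G.nabla X₁ (nablaD G P X₂ X₃)) X₄ =
      G.g (G.nabla X₁ (G.nabla X₂ X₃)) X₄ + G.g (sff G P X₂ X₃) (sff G P X₁ X₄) := by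
    have hd : nablaD G P X₂ X₃ = G.nabla X₂ X₃ - sff G P X₂ X₃ := by
      unfold nablaD sff; abel
    rw [hd, hsub_r, map_sub, LinearMap.sub_apply, hnablaB _ _ _ _ h₄]
    ring
  have t2 : G.g (G.nabla X₂ (nablaD G P X₁ X₃)) X₄ =
      G.g (G.nabla X₂ (G.nabla X₁ X₃)) X₄ + G.g (sff G P X₁ X₃) (sff G P X₂ X₄) := by
    have hd : nablaD G P X₁ X₃ = G.nabla X₁ X₃ - sff G P X₁ X₃ := by
      unfold nablaD sff; abel
    rw [hd, hsub_r, map_sub, LinearMap.sub_apply, hnablaB _ _ _ _ h₄]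
    ring
  have t3 : G.g (G.nabla (P.piD (G.bracket X₁ X₂)) X₃) X₄ =
      G.g (G.nabla (G.bracket X₁ X₂) X₃) X₄ -
        G.g (P.piD (G.nabla (G.bracket X₁ X₂ - P.piD (G.bracket X₁ X₂)) X₃)) X₄ := by
    have hb : G.nabla (G.bracket X₁ X₂) X₃ =
        G.nabla (P.piD (G.bracket X₁ X₂)) X₃ +
          G.nabla (G.bracket X₁ X₂ - P.piD (G.bracket X₁ X₂)) X₃ := by
      rw [← G.nabla_add_left]
      congr 1
      abel
    have hg := congrArg (fun v => G.g v X₄) hb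
    simp only [map_add, LinearMap.add_apply] at hg
    rw [hproj _ _ h₄]
    linear_combination -hg
  have hnd : ∀ A B : V, G.g (nablaD G P A B) X₄ = G.g (G.nabla A B) X₄ :=
    fun A B => hproj _ _ h₄
  have eL : G.g (curvRD G P X₁ X₂ X₃) X₄ =
      G.g (G.nabla X₁ (nablaD G P X₂ X₃)) X₄ -
        G.g (G.nabla X₂ (nablaD G P X₁ X₃)) X₄ -
        G.g (G.nabla (P.piD (G.bracket X₁ X₂)) X₃) X₄ := by
    unfold curvRD
    rw [map_sub, map_sub, LinearMap.sub_apply, LinearMap.sub_apply, hnd, hnd, hnd]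
  have eR : G.g (curvR G X₁ X₂ X₃) X₄ =
      G.g (G.nabla X₁ (G.nabla X₂ X₃)) X₄ -
        G.g (G.nabla X₂ (G.nabla X₁ X₃)) X₄ -
        G.g (G.nabla (G.bracket X₁ X₂) X₃) X₄ := by
    unfold curvR
    rw [map_sub, map_sub, LinearMap.sub_apply, LinearMap.sub_apply]
  rw [eL, t1, t2, t3, eR]
  ring
end
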